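/- Consider the k-Server with Preferences Problem with k = 3 servers on the uniform metric on a set of 3 points, and the LRU-based algorithm that: serves every general request requiring a movement by moving its least-recently-moved server onto the request's point; serves every specific request for server j requiring a movement by moving j onto the request's point; and after each movement counts the moved server as the most recently moved one (starting from an arbitrary fixed initial recency order). For every initial recency order, this algorithm has an unbounded competitive ratio: for every real c there exist an initial configuration and a request sequence σ with OPT(σ) ≥ 1 and with the algorithm's cost on σ strictly greater than c·OPT(σ). -/
import Mathlib


/-!
Framework for the k-Server with Preferences Problem.

Servers are indexed by a type `K`, points of the metric space by a type `P`,
and the distance is given by a function `d : P → P → ℝ`.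

A request is either general (any server may serve it) or specific
(a designated server must serve it).  A configuration assigns to each
server a point.  A deterministic online algorithm maps the initial
configuration together with the list of requests seen so far to its
current configuration; its cost is the total distance travelled.
`OPT` is the infimum cost over all offline sequences of configurations
serving the requests in order, starting from the same initial
configuration.
-/

namespace KServerPref

inductive Request (K P : Type) where
  | general (v : P) : Request K P
  | specific (j : K) (v : P) : Request K P

variable {K P : Type}

/-- The point at which a request appears. -/
def Request.point : Request K P → P
  | .general v => v
  | .specific _ v => v

/-- Whether a request is specific. -/
def Request.isSpec : Request K P → Bool
  | .general _ => false
  | .specific _ _ => true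

/-- A configuration `cfg` serves a request. -/
def Serves (cfg : K → P) : Request K P → Prop
  | .general v => ∃ j, cfg j = v
  | .specific j v => cfg j = v

instance instDecidableServes [Fintype K] [DecidableEq P] (cfg : K → P) :
    (r : Request K P) → Decidable (Serves cfg r)
  | .general v => inferInstanceAs (Decidable (∃ j, cfg j = v))
  | .specific j v => inferInstanceAs (Decidable (cfg j = v))

/-- A deterministic online algorithm: maps the initial configuration and the
history of requests received so far to the current configuration. -/
def Alg (K P : Type) := (K → P) → List (Request K P) → (K → P)

/-- The algorithm starts in the initial configuration, and after each request
arrives it is in a configuration serving that request. -/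
def IsOnline (A : Alg K P) : Prop :=
  (∀ c₀, A c₀ [] = c₀) ∧
  ∀ (c₀ : K → P) (l : List (Request K P)) (r : Request K P),
    Serves (A c₀ (l ++ [r])) r

/-- Total distance travelled when going from configuration `c` to `c'`. -/
def configCost [Fintype K] (d : P → P → ℝ) (c c' : K → P) : ℝ :=
  ∑ j, d (c j) (c' j)

/-- Total movement cost of the online algorithm `A` on the request sequence `σ`
starting from the initial configuration `c₀`. -/
def algCost [Fintype K] (d : P → P → ℝ) (A : Alg K P) (c₀ : K → P)
    (σ : List (Request K P)) : ℝ :=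
  ∑ i ∈ Finset.range σ.length,
    configCost d (A c₀ (σ.take i)) (A c₀ (σ.take (i + 1)))

/-- An offline sequence of configurations `os` starts at `c₀` and serves the
requests of `σ` in order. -/
def ServesSeq (c₀ : K → P) (σ : List (Request K P)) (os : ℕ → K → P) : Prop :=
  os 0 = c₀ ∧ ∀ i : Fin σ.length, Serves (os (i.1 + 1)) (σ.get i)

/-- Total movement cost of an offline sequence of configurations on `σ`. -/
def offlineCost [Fintype K] (d : P → P → ℝ) (σ : List (Request K P))
    (os : ℕ → K → P) : ℝ :=
  ∑ i ∈ Finset.range σ.length, configCost d (os i) (os (i + 1))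

/-- The optimal offline cost on `σ`, starting from `c₀`. -/
noncomputable def OPT [Fintype K] (d : P → P → ℝ) (c₀ : K → P)
    (σ : List (Request K P)) : ℝ :=
  sInf {x | ∃ os, ServesSeq c₀ σ os ∧ offlineCost d σ os = x}

/-- The uniform metric: distance `1` between any two distinct points. -/
def unif [DecidableEq P] (x y : P) : ℝ := if x = y then 0 else 1

end KServerPref

namespace KServerPref

/-- One step of the LRU-based algorithm for `k = 3` servers on the uniform metric on
3 points.  The state consists of the current configuration together with the recency
order of the servers (least-recently-moved first).  A general request requiring a
movement is served by moving the least-recently-moved server; a specific request for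
`j` requiring a movement is served by moving `j`; a moved server becomes the most
recently moved one; nothing changes if the request is already served. -/
def lruStep (st : (Fin 3 → Fin 3) × List (Fin 3)) (r : Request (Fin 3) (Fin 3)) :
    (Fin 3 → Fin 3) × List (Fin 3) :=
  if Serves st.1 r then st
  else
    match r with
    | .general v =>
        match st.2 with
        | [] => st
        | j :: rest => (Function.update st.1 j v, rest ++ [j])
    | .specific j v => (Function.update st.1 j v, st.2.erase j ++ [j])

/-- The LRU-based algorithm with initial recency order `ord₀`. -/
def lru (ord₀ : List (Fin 3)) : Alg (Fin 3) (Fin 3) :=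
  fun c₀ l => (l.foldl lruStep (c₀, ord₀)).1

/-! ### Auxiliary material for the lower-bound construction -/

/-- Number of servers moved between two configurations. -/
def nconfig (c c' : Fin 3 → Fin 3) : ℕ :=
  (Finset.univ.filter fun j => c j ≠ c' j).card

lemma configCost_unif_eq (c c' : Fin 3 → Fin 3) :
    configCost unif c c' = (nconfig c c' : ℝ) := by
  unfold configCost nconfig unif
  rw [Finset.card_filter, Nat.cast_sum]
  refine Finset.sum_congr rfl fun j _ => ?_
  by_cases h : c j = c' j <;> simp [h]

lemma unif_nonneg (x y : Fin 3) : 0 ≤ unif x y := by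
  unfold unif; split <;> norm_num

lemma configCost_unif_nonneg (c c' : Fin 3 → Fin 3) :
    0 ≤ configCost unif c c' := by
  rw [configCost_unif_eq]; positivity

lemma configCost_unif_self (c : Fin 3 → Fin 3) : configCost unif c c = 0 := by
  simp [configCost, unif]

/-- Natural-number valued running cost of the LRU algorithm. -/
def runCostN : (Fin 3 → Fin 3) × List (Fin 3) → List (Request (Fin 3) (Fin 3)) → ℕ
  | _, [] => 0
  | st, r :: l => nconfig st.1 (lruStep st r).1 + runCostN (lruStep st r) l

lemma sum_eq_runCostN (σ : List (Request (Fin 3) (Fin 3))) :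
    ∀ st : (Fin 3 → Fin 3) × List (Fin 3),
      (∑ i ∈ Finset.range σ.length,
        configCost unif ((σ.take i).foldl lruStep st).1
          ((σ.take (i + 1)).foldl lruStep st).1) = (runCostN st σ : ℝ) := by
  induction σ with
  | nil => intro st; simp [runCostN]
  | cons r l ih =>
    intro st
    rw [List.length_cons, Finset.sum_range_succ']
    simp only [List.take_succ_cons, List.take_zero, List.foldl_cons, List.foldl_nil]
    rw [ih (lruStep st r)]
    show (runCostN (lruStep st r) l : ℝ) + configCost unif st.1 (lruStep st r).1
        = ((nconfig st.1 (lruStep st r).1 + runCostN (lruStep st r) l : ℕ) : ℝ)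
    rw [configCost_unif_eq]; push_cast; ring

lemma algCost_lru (ord₀ : List (Fin 3)) (c₀ : Fin 3 → Fin 3)
    (σ : List (Request (Fin 3) (Fin 3))) :
    algCost unif (lru ord₀) c₀ σ = (runCostN (c₀, ord₀) σ : ℝ) := by
  unfold algCost lru
  exact sum_eq_runCostN σ (c₀, ord₀)

lemma runCostN_append (l₁ l₂ : List (Request (Fin 3) (Fin 3))) :
    ∀ st, runCostN st (l₁ ++ l₂) = runCostN st l₁ + runCostN (l₁.foldl lruStep st) l₂ := by
  induction l₁ with
  | nil => intro st; simp [runCostN]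
  | cons r l ih => intro st; simp [runCostN, ih, Nat.add_assoc]

/-- The prefix of the adversarial sequence. -/
def preL : List (Request (Fin 3) (Fin 3)) :=
  [.specific 0 2, .specific 1 1, .specific 2 2, .specific 1 0, .specific 0 0, .general 1]

/-- The repeated block of the adversarial sequence. -/
def BB : List (Request (Fin 3) (Fin 3)) :=
  [.general 2, .specific 2 2, .general 1, .general 0, .specific 0 0, .general 1]

/-- The state the LRU algorithm is in after the prefix. -/
def S0 : (Fin 3 → Fin 3) × List (Fin 3) := (![0, 0, 1], [1, 0, 2])

def blocks : ℕ → List (Request (Fin 3) (Fin 3))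
  | 0 => []
  | n + 1 => BB ++ blocks n

def cZero : Fin 3 → Fin 3 := fun _ => 0
def cfgA : Fin 3 → Fin 3 := ![2, 1, 2]
def cfgB : Fin 3 → Fin 3 := ![0, 0, 2]
def cfgC : Fin 3 → Fin 3 := ![0, 1, 2]

/-- The offline sequence of configurations. -/
def osOpt : ℕ → Fin 3 → Fin 3 := fun t =>
  if t = 0 then cZero else if t ≤ 3 then cfgA else if t = 4 then cfgB else cfgC

lemma lruStep_spec_move (c : Fin 3 → Fin 3) (l : List (Fin 3)) (j v : Fin 3)
    (h : c j ≠ v) :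
    lruStep (c, l) (.specific j v) = (Function.update c j v, l.erase j ++ [j]) := by
  simp [lruStep, Serves, h]

lemma lruStep_gen_move (c : Fin 3 → Fin 3) (j : Fin 3) (rest : List (Fin 3)) (v : Fin 3)
    (h : ¬ ∃ i, c i = v) :
    lruStep (c, j :: rest) (.general v) = (Function.update c j v, rest ++ [j]) := by
  simp [lruStep, Serves, h]

lemma BB_foldl : BB.foldl lruStep S0 = S0 := by decide

lemma BB_cost : runCostN S0 BB = 6 := by decide

lemma BB_serve : ∀ r ∈ BB, Serves cfgC r := by decide

lemma blocks_foldl (n : ℕ) : (blocks n).foldl lruStep S0 = S0 := by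
  induction n with
  | zero => rfl
  | succ n ih => rw [blocks, List.foldl_append, BB_foldl, ih]

lemma blocks_cost (n : ℕ) : runCostN S0 (blocks n) = 6 * n := by
  induction n with
  | zero => rfl
  | succ n ih => rw [blocks, runCostN_append, BB_foldl, BB_cost, ih]; ring

lemma blocks_serve (n : ℕ) : ∀ r ∈ blocks n, Serves cfgC r := by
  induction n with
  | zero => intro r hr; simp [blocks] at hr
  | succ n ih =>
    intro r hr
    rw [blocks, List.mem_append] at hr
    rcases hr with hr | hr
    · exact BB_serve r hr
    · exact ih r hr

lemma blocks_length (n : ℕ) : (blocks n).length = 6 * n := by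
  induction n with
  | zero => rfl
  | succ n ih => rw [blocks, List.length_append, ih]; simp [BB]; ring

lemma ord_length (ord₀ : List (Fin 3)) (hnd : ord₀.Nodup) (hall : ∀ j : Fin 3, j ∈ ord₀) :
    ord₀.length = 3 := by
  have h1 : ord₀.toFinset = Finset.univ := Finset.eq_univ_iff_forall.2 (by simp [hall])
  have h2 := List.toFinset_card_of_nodup hnd
  rw [h1] at h2
  simpa using h2.symm

lemma pre_run (ord₀ : List (Fin 3)) (hnd : ord₀.Nodup) (hall : ∀ j : Fin 3, j ∈ ord₀) :
    preL.foldl lruStep (cZero, ord₀) = S0 := by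
  have h1 : (1 : Fin 3) ∈ ord₀.erase 0 :=
    (List.mem_erase_of_ne (by decide)).2 (hall 1)
  have h2 : (2 : Fin 3) ∈ (ord₀.erase 0).erase 1 :=
    (List.mem_erase_of_ne (by decide)).2 ((List.mem_erase_of_ne (by decide)).2 (hall 2))
  have hE : ((ord₀.erase 0).erase 1).erase 2 = [] := by
    have := ord_length ord₀ hnd hall
    have l1 : (ord₀.erase 0).length = 2 := by
      rw [List.length_erase_of_mem (hall 0), this]
    have l2 : ((ord₀.erase 0).erase 1).length = 1 := by
      rw [List.length_erase_of_mem h1, l1]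
    have l3 : (((ord₀.erase 0).erase 1).erase 2).length = 0 := by
      rw [List.length_erase_of_mem h2, l2]
    exact List.eq_nil_of_length_eq_zero l3
  show List.foldl lruStep (cZero, ord₀)
    [.specific 0 2, .specific 1 1, .specific 2 2, .specific 1 0, .specific 0 0, .general 1] = S0
  rw [List.foldl_cons, lruStep_spec_move _ _ _ _ (by decide)]
  rw [List.foldl_cons, lruStep_spec_move _ _ _ _ (by decide)]
  rw [List.erase_append_left _ h1]
  rw [List.foldl_cons, lruStep_spec_move _ _ _ _ (by decide)]
  rw [show (ord₀.erase 0).erase 1 ++ [0] ++ [1] = (ord₀.erase 0).erase 1 ++ [0, 1] by simp]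
  rw [List.erase_append_left _ h2, hE]
  show List.foldl lruStep
    (Function.update (Function.update (Function.update cZero 0 2) 1 1) 2 2, ([0, 1] ++ [2]))
    [.specific 1 0, .specific 0 0, .general 1] = S0
  have hc : (Function.update (Function.update (Function.update cZero 0 2) 1 1) 2 2,
      (([0, 1] ++ [2] : List (Fin 3)))) = (cfgA, ([0, 1, 2] : List (Fin 3))) := by
    rw [Prod.mk.injEq]
    exact ⟨by funext j; fin_cases j <;> rfl, by rfl⟩
  rw [hc]
  decide

lemma preL_cZero_not_served : cZero 0 ≠ (2 : Fin 3) := by decide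

/-- The simple LRU adaptation has an unbounded competitive ratio for `k = 3` servers
on the uniform metric on 3 points, for every initial recency order. -/
theorem lru_adaptation_unbounded_competitive_ratio
    (ord₀ : List (Fin 3)) (hnd : ord₀.Nodup) (hall : ∀ j : Fin 3, j ∈ ord₀)
    (c : ℝ) :
    ∃ (c₀ : Fin 3 → Fin 3) (σ : List (Request (Fin 3) (Fin 3))),
      1 ≤ OPT unif c₀ σ ∧
      c * OPT unif c₀ σ < algCost unif (lru ord₀) c₀ σ := by
  classical
  set n : ℕ := Nat.ceil |c| + 1 with hndef
  refine ⟨cZero, preL ++ blocks n, ?_, ?_⟩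
  all_goals
    have hlenσ : (preL ++ blocks n).length = 6 + 6 * n := by
      rw [List.length_append, blocks_length]; rfl
    have hosserve : ServesSeq cZero (preL ++ blocks n) osOpt := by
      refine ⟨rfl, ?_⟩
      rintro ⟨iv, hiv⟩
      simp only [List.get_eq_getElem]
      rcases iv with _ | (_ | (_ | (_ | (_ | (_ | m)))))
      · exact (by decide : Serves cfgA (Request.specific 0 2))
      · exact (by decide : Serves cfgA (Request.specific 1 1))
      · exact (by decide : Serves cfgA (Request.specific 2 2))
      · exact (by decide : Serves cfgB (Request.specific 1 0))
      · exact (by decide : Serves cfgC (Request.specific 0 0))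
      · exact (by decide : Serves cfgC (Request.general 1))
      · -- index m + 6 : inside the blocks
        have h6 : preL.length ≤ m + 6 := by simp [preL]
        change Serves (osOpt (m + 6 + 1)) ((preL ++ blocks n)[m + 6]'hiv)
        have hos : osOpt (m + 6 + 1) = cfgC := by
          show (if m + 7 = 0 then cZero else if m + 7 ≤ 3 then cfgA
            else if m + 7 = 4 then cfgB else cfgC) = cfgC
          rw [if_neg (by omega), if_neg (by omega), if_neg (by omega)]
        rw [List.getElem_append_right h6, hos]
        exact blocks_serve n _ (List.getElem_mem _)
    have hoscost : offlineCost unif (preL ++ blocks n) osOpt = 6 := by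
      have hterm : ∀ i : ℕ, configCost unif (osOpt i) (osOpt (i + 1))
          = if i = 0 then 3 else if i = 3 then 2 else if i = 4 then 1 else 0 := by
        intro i
        rcases i with _ | (_ | (_ | (_ | (_ | m))))
        · show configCost unif cZero cfgA = 3
          rw [configCost_unif_eq, show nconfig cZero cfgA = 3 from by decide]
          norm_num
        · show configCost unif cfgA cfgA = _
          rw [configCost_unif_self]; norm_num
        · show configCost unif cfgA cfgA = _
          rw [configCost_unif_self]; norm_num
        · show configCost unif cfgA cfgB = _
          rw [configCost_unif_eq, show nconfig cfgA cfgB = 2 from by decide]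
          norm_num
        · show configCost unif cfgB cfgC = _
          rw [configCost_unif_eq, show nconfig cfgB cfgC = 1 from by decide]
          norm_num
        · show configCost unif (osOpt (m + 5)) (osOpt (m + 5 + 1))
              = if m + 5 = 0 then (3:ℝ) else if m + 5 = 3 then 2 else if m + 5 = 4 then 1 else 0
          have e1 : osOpt (m + 5) = cfgC := by
            show (if m + 5 = 0 then cZero else if m + 5 ≤ 3 then cfgA
              else if m + 5 = 4 then cfgB else cfgC) = cfgC
            rw [if_neg (by omega), if_neg (by omega), if_neg (by omega)]
          have e2 : osOpt (m + 5 + 1) = cfgC := by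
            show (if m + 6 = 0 then cZero else if m + 6 ≤ 3 then cfgA
              else if m + 6 = 4 then cfgB else cfgC) = cfgC
            rw [if_neg (by omega), if_neg (by omega), if_neg (by omega)]
          rw [e1, e2, configCost_unif_self]
          rw [if_neg (by omega), if_neg (by omega), if_neg (by omega)]
      unfold offlineCost
      rw [hlenσ]
      simp only [hterm]
      rw [Finset.range_eq_Ico, ← Finset.sum_Ico_consecutive _ (by omega : 0 ≤ 6)
        (by omega : 6 ≤ 6 + 6 * n)]
      have hrest : (∑ i ∈ Finset.Ico 6 (6 + 6 * n),
          ((if i = 0 then (3:ℝ) else if i = 3 then 2 else if i = 4 then 1 else 0))) = 0 := by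
        apply Finset.sum_eq_zero
        intro i hi
        rw [Finset.mem_Ico] at hi
        rw [if_neg (by omega), if_neg (by omega), if_neg (by omega)]
      rw [hrest, ← Finset.range_eq_Ico]
      norm_num [Finset.sum_range_succ]
    have hsetmem : (6 : ℝ) ∈ {x | ∃ os, ServesSeq cZero (preL ++ blocks n) os ∧
        offlineCost unif (preL ++ blocks n) os = x} := ⟨osOpt, hosserve, hoscost⟩
    have hbdd : ∀ x ∈ {x | ∃ os, ServesSeq cZero (preL ++ blocks n) os ∧
        offlineCost unif (preL ++ blocks n) os = x}, (0:ℝ) ≤ x := by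
      rintro x ⟨os, _, rfl⟩
      exact Finset.sum_nonneg fun i _ => configCost_unif_nonneg _ _
    have hlow : ∀ x ∈ {x | ∃ os, ServesSeq cZero (preL ++ blocks n) os ∧
        offlineCost unif (preL ++ blocks n) os = x}, (1:ℝ) ≤ x := by
      rintro x ⟨os, ⟨hos0, hosserve'⟩, rfl⟩
      have hL : 0 < (preL ++ blocks n).length := by rw [hlenσ]; omega
      have hfirst := hosserve' ⟨0, hL⟩
      have hfe : (preL ++ blocks n).get ⟨0, hL⟩ = Request.specific 0 2 := rfl
      rw [hfe] at hfirst
      have h1 : os 1 0 = 2 := hfirst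
      have step1 : unif (os 0 0) (os 1 0) ≤ configCost unif (os 0) (os 1) := by
        exact Finset.single_le_sum (f := fun j => unif (os 0 j) (os 1 j))
          (fun j _ => unif_nonneg _ _) (Finset.mem_univ 0)
      have step2 : configCost unif (os 0) (os 1) ≤ offlineCost unif (preL ++ blocks n) os := by
        exact Finset.single_le_sum (f := fun i => configCost unif (os i) (os (i + 1)))
          (fun i _ => configCost_unif_nonneg _ _) (Finset.mem_range.2 hL)
      have hval : unif (os 0 0) (os 1 0) = 1 := by
        rw [hos0, h1]
        show unif (cZero 0) 2 = 1
        rw [show cZero 0 = 0 from rfl]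
        unfold unif
        rw [if_neg (by decide)]
      linarith
    have hOPT1 : 1 ≤ OPT unif cZero (preL ++ blocks n) :=
      le_csInf ⟨6, hsetmem⟩ hlow
    have hOPT6 : OPT unif cZero (preL ++ blocks n) ≤ 6 :=
      csInf_le ⟨0, hbdd⟩ hsetmem
  · exact hOPT1
  · have hALG : algCost unif (lru ord₀) cZero (preL ++ blocks n)
        = ((runCostN (cZero, ord₀) preL + 6 * n : ℕ) : ℝ) := by
      rw [algCost_lru, runCostN_append, pre_run ord₀ hnd hall, blocks_cost]
    have hALG' : (6 * n : ℝ) ≤ algCost unif (lru ord₀) cZero (preL ++ blocks n) := by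
      rw [hALG]; push_cast; linarith [Nat.cast_nonneg (α := ℝ) (runCostN (cZero, ord₀) preL)]
    have hcn : |c| < (n : ℝ) := by
      rw [hndef]; push_cast
      have := Nat.le_ceil |c|
      linarith
    have h1 : c * OPT unif cZero (preL ++ blocks n) ≤ |c| * OPT unif cZero (preL ++ blocks n) :=
      mul_le_mul_of_nonneg_right (le_abs_self c) (by linarith)
    have h2 : |c| * OPT unif cZero (preL ++ blocks n) ≤ |c| * 6 :=
      mul_le_mul_of_nonneg_left hOPT6 (abs_nonneg c)
    have h3 : |c| * 6 < (n : ℝ) * 6 := by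
      apply mul_lt_mul_of_pos_right hcn
      norm_num
    calc c * OPT unif cZero (preL ++ blocks n)
        ≤ |c| * 6 := le_trans h1 h2
      _ < (n : ℝ) * 6 := h3
      _ = (6 * n : ℝ) := by ring
      _ ≤ _ := hALG'

end KServerPref
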